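/- Let Θ ∈ H^∞(B(E, E*)) be a contractive holomorphic function, Δ(e^{it}) = (I − Θ(e^{it})*Θ(e^{it}))^{1/2}, and M(Θ) = {Θu ⊕ Δu : u ∈ H²(E)} ⊆ H²(E*) ⊕ closure(Δ L²(E)). Then for every e* ∈ E*, the orthogonal projection of the constant function e* ⊕ 0 onto M(Θ) equals ΘΘ(0)* e* ⊕ ΔΘ(0)* e*. -/

import Mathlib

noncomputable section

/-- The vector-valued Hardy space `H²(E)`, realized as the space of square-summable
sequences of Taylor coefficients. -/
abbrev HardyS (E : Type*) [NormedAddCommGroup E] [InnerProductSpace ℂ E] :=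
  lp (fun _ : ℕ => E) 2

/-- The vector-valued Lebesgue space `L²(E)` on the circle, realized as the space of
square-summable two-sided sequences of Fourier coefficients. -/
abbrev LebS (E : Type*) [NormedAddCommGroup E] [InnerProductSpace ℂ E] :=
  lp (fun _ : ℤ => E) 2

/-! Polarization turns `‖Θu‖² + ‖Δu‖² = ‖u‖²` into `⟪Θv, Θu⟫ + ⟪Δv, Δu⟫ = ⟪v, u⟫`. The constant
`e*` only sees the zeroth Taylor coefficient `(Θu)(0) = Θ(0) u(0)`, so `⟪e*, Θu⟫ = ⟪Θ(0)* e*, u⟫`.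
For `v = Θ(0)* e*` the two identities give `⟪e* ⊕ 0 - (Θv ⊕ Δv), Θu ⊕ Δu⟫ = ⟪v, u⟫ - ⟪v, u⟫ = 0`. -/

theorem inner_add_inner_eq_inner_of_norm_sq_add_norm_sq_eq {𝕜 H K₁ K₂ : Type*} [RCLike 𝕜]
    [NormedAddCommGroup H] [InnerProductSpace 𝕜 H]
    [NormedAddCommGroup K₁] [InnerProductSpace 𝕜 K₁]
    [NormedAddCommGroup K₂] [InnerProductSpace 𝕜 K₂]
    (A : H →ₗ[𝕜] K₁) (B : H →ₗ[𝕜] K₂) (h : ∀ u, ‖A u‖ ^ 2 + ‖B u‖ ^ 2 = ‖u‖ ^ 2) (a b : H) :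
    inner 𝕜 (A a) (A b) + inner 𝕜 (B a) (B b) = (inner 𝕜 a b : 𝕜) := by
  have hcast : ∀ u, (‖A u‖ : 𝕜) ^ 2 + (‖B u‖ : 𝕜) ^ 2 = (‖u‖ : 𝕜) ^ 2 := fun u => by
    exact_mod_cast h u
  have h₁ := hcast (a + b)
  have h₂ := hcast (a - b)
  have h₃ := hcast (a - (RCLike.I : 𝕜) • b)
  have h₄ := hcast (a + (RCLike.I : 𝕜) • b)
  simp only [map_add, map_sub, map_smul] at h₁ h₂ h₃ h₄
  simp only [inner_eq_sum_norm_sq_div_four (𝕜 := 𝕜)]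
  linear_combination (h₁ - h₂ + (h₃ - h₄) * (RCLike.I : 𝕜)) / 4

theorem lp.inner_single_apply_eq_inner_single_adjoint {ι E F : Type*} [DecidableEq ι]
    [NormedAddCommGroup E] [InnerProductSpace ℂ E] [CompleteSpace E]
    [NormedAddCommGroup F] [InnerProductSpace ℂ F] [CompleteSpace F]
    (T : lp (fun _ : ι => E) 2 → lp (fun _ : ι => F) 2) (S : E →L[ℂ] F) (i : ι)
    (hT : ∀ u, T u i = S (u i)) (e : F) (u : lp (fun _ : ι => E) 2) :
    inner ℂ (lp.single 2 i e) (T u) = (inner ℂ (lp.single 2 i (S.adjoint e)) u : ℂ) := by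
  rw [lp.inner_single_left, lp.inner_single_left, hT, ContinuousLinearMap.adjoint_inner_left]

theorem projection_onto_MTheta_general {E Estar : Type*}
    [NormedAddCommGroup E] [InnerProductSpace ℂ E] [CompleteSpace E]
    [NormedAddCommGroup Estar] [InnerProductSpace ℂ Estar] [CompleteSpace Estar]
    (θ : ℕ → E →L[ℂ] Estar)
    (MΘ : HardyS E →L[ℂ] HardyS Estar)
    (hMΘ : ∀ (u : HardyS E) (n : ℕ), (MΘ u) n = ∑ k ∈ Finset.range (n + 1), θ k (u (n - k)))
    (MΔ : LebS E →L[ℂ] LebS E)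
    (ι : HardyS E →L[ℂ] LebS E)
    (hnorm : ∀ u : HardyS E, ‖MΘ u‖ ^ 2 + ‖MΔ (ι u)‖ ^ 2 = ‖u‖ ^ 2)
    (e : Estar) :
    ((MΘ (lp.single 2 0 ((ContinuousLinearMap.adjoint (θ 0)) e)),
        MΔ (ι (lp.single 2 0 ((ContinuousLinearMap.adjoint (θ 0)) e)))) ∈
      Set.range (fun u : HardyS E => (MΘ u, MΔ (ι u)))) ∧
    ∀ u : HardyS E,
      (inner ℂ ((lp.single 2 0 e : HardyS Estar) -
          MΘ (lp.single 2 0 ((ContinuousLinearMap.adjoint (θ 0)) e))) (MΘ u) : ℂ) +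
        (inner ℂ ((0 : LebS E) -
          MΔ (ι (lp.single 2 0 ((ContinuousLinearMap.adjoint (θ 0)) e)))) (MΔ (ι u)) : ℂ) = 0 := by
  set v : HardyS E := lp.single 2 0 ((ContinuousLinearMap.adjoint (θ 0)) e)
  refine ⟨⟨v, rfl⟩, fun u => ?_⟩
  have hconst : inner ℂ (lp.single 2 0 e : HardyS Estar) (MΘ u) = (inner ℂ v u : ℂ) :=
    lp.inner_single_apply_eq_inner_single_adjoint MΘ (θ 0) 0
      (fun w => by simp only [hMΘ, zero_add, Finset.sum_range_one]) e u
  have hiso : inner ℂ (MΘ v) (MΘ u) + inner ℂ (MΔ (ι v)) (MΔ (ι u)) = (inner ℂ v u : ℂ) :=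
    inner_add_inner_eq_inner_of_norm_sq_add_norm_sq_eq MΘ.toLinearMap (MΔ ∘L ι).toLinearMap
      hnorm v u
  rw [inner_sub_left, inner_sub_left, inner_zero_left, hconst]
  linear_combination -hiso

/-- Let `Θ ∈ H^∞(B(E,E*))` be contractive, with multiplication operator `MΘ` (given by the
Taylor coefficients `θ`), and let `MΔ` be multiplication by `Δ = (I − Θ*Θ)^{1/2}` on `L²(E)`,
so that `u ↦ Θu ⊕ Δu` is isometric, `ι : H²(E) → L²(E)` being the natural inclusion.
Then for every `e* ∈ E*`, the orthogonal projection of `e* ⊕ 0` onto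
`M(Θ) = {Θu ⊕ Δu : u ∈ H²(E)}` equals `ΘΘ(0)*e* ⊕ ΔΘ(0)*e*`: the latter lies in `M(Θ)`
and the difference is orthogonal to `M(Θ)`. -/
theorem projection_onto_MTheta {E Estar : Type*}
    [NormedAddCommGroup E] [InnerProductSpace ℂ E] [CompleteSpace E]
    [NormedAddCommGroup Estar] [InnerProductSpace ℂ Estar] [CompleteSpace Estar]
    (θ : ℕ → E →L[ℂ] Estar)
    (MΘ : HardyS E →L[ℂ] HardyS Estar)
    (hMΘ : ∀ (u : HardyS E) (n : ℕ), (MΘ u) n = ∑ k ∈ Finset.range (n + 1), θ k (u (n - k)))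
    (MΔ : LebS E →L[ℂ] LebS E)
    (ι : HardyS E →L[ℂ] LebS E)
    (hι : ∀ (u : HardyS E) (n : ℤ), (ι u) n = if 0 ≤ n then u n.toNat else 0)
    (hnorm : ∀ u : HardyS E, ‖MΘ u‖ ^ 2 + ‖MΔ (ι u)‖ ^ 2 = ‖u‖ ^ 2)
    (e : Estar) :
    ((MΘ (lp.single 2 0 ((ContinuousLinearMap.adjoint (θ 0)) e)),
        MΔ (ι (lp.single 2 0 ((ContinuousLinearMap.adjoint (θ 0)) e)))) ∈
      Set.range (fun u : HardyS E => (MΘ u, MΔ (ι u)))) ∧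
    ∀ u : HardyS E,
      (inner ℂ ((lp.single 2 0 e : HardyS Estar) -
          MΘ (lp.single 2 0 ((ContinuousLinearMap.adjoint (θ 0)) e))) (MΘ u) : ℂ) +
        (inner ℂ ((0 : LebS E) -
          MΔ (ι (lp.single 2 0 ((ContinuousLinearMap.adjoint (θ 0)) e)))) (MΔ (ι u)) : ℂ) = 0 :=
  projection_onto_MTheta_general θ MΘ hMΘ MΔ ι hnorm e
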